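/- arXiv:2105.06031 — 2 statements merged into one kernel-verified Lean document; each statement's English description precedes it below -/
import Mathlib

section
/- Let m, k be positive integers with k ≤ m and let q ∈ (0,1). Then Σ_{l=1}^{k} (m choose l) q^l Σ_{m₁+⋯+m_l = k, mᵢ ≥ 1} (k choose m₁,…,m_l)² = k! q^k m!/(k!(m−k)!) · k! + O(q^{k−1} m^{k−1}), and in particular this sum is at most c₀·k!·q^k·m^k for any constant c₀ > 1 when qm is sufficiently large relative to k. -/
open Finset

/-- The moment sum Σ_{l=1}^k (m choose l) q^l Σ_{m₁+⋯+m_l = k, mᵢ ≥ 1} (k choose m₁,…,m_l)². -/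
noncomputable def momentSum (q : ℝ) (k m : ℕ) : ℝ :=
  ∑ l ∈ Finset.Icc 1 k, (m.choose l : ℝ) * q ^ l *
    ∑ t ∈ (Finset.Nat.antidiagonalTuple l k).filter (fun t => ∀ i, 1 ≤ t i),
      ((Nat.multinomial Finset.univ t : ℝ)) ^ 2

/-!
Only the term `l = k` of the moment sum is of order `m ^ k`: the composition of `k` into `k`
positive parts is `(1, …, 1)`, which contributes `(m choose k) q^k (k!)²`, and
`(m choose k) k! ≤ m ^ k`. Every other term has `l ≤ k - 1`, so `(m choose l) ≤ m ^ (k - 1)`,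
while for fixed `q` and `k` the remaining coefficients are constants. Hence the remainder is
`O(q^{k-1} m^{k-1})`, which is at most `(c₀ - 1) k! q^k m^k` as soon as `q m` is large.
-/

noncomputable def multinomialSqSum (l k : ℕ) : ℝ :=
  ∑ t ∈ (Finset.Nat.antidiagonalTuple l k).filter (fun t => ∀ i, 1 ≤ t i),
    ((Nat.multinomial Finset.univ t : ℝ)) ^ 2

lemma multinomialSqSum_nonneg (l k : ℕ) : 0 ≤ multinomialSqSum l k :=
  sum_nonneg fun _ _ => sq_nonneg _

lemma antidiagonalTuple_filter_one_le_self (k : ℕ) :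
    (Finset.Nat.antidiagonalTuple k k).filter (fun t => ∀ i, 1 ≤ t i) = {fun _ => 1} := by
  ext t
  simp only [mem_filter, Finset.Nat.mem_antidiagonalTuple, mem_singleton]
  constructor
  · rintro ⟨hsum, hpos⟩
    have hsum' : ∑ _i : Fin k, 1 = ∑ i, t i := by simp [hsum]
    funext i
    exact ((sum_eq_sum_iff_of_le fun i _ => hpos i).mp hsum' i (mem_univ i)).symm
  · rintro rfl
    simp

lemma multinomial_univ_one (k : ℕ) :
    Nat.multinomial (univ : Finset (Fin k)) (fun _ => 1) = k.factorial := by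
  simpa using Nat.multinomial_spec (univ : Finset (Fin k)) (fun _ => 1)

lemma multinomialSqSum_self (k : ℕ) : multinomialSqSum k k = (k.factorial : ℝ) ^ 2 := by
  simp [multinomialSqSum, antidiagonalTuple_filter_one_le_self, multinomial_univ_one]

noncomputable def momentTail (q : ℝ) (k m : ℕ) : ℝ :=
  ∑ l ∈ Ico 1 k, (m.choose l : ℝ) * q ^ l * multinomialSqSum l k

lemma momentSum_eq_add_momentTail {k : ℕ} (hk : 1 ≤ k) (q : ℝ) (m : ℕ) :
    momentSum q k m = (m.choose k : ℝ) * q ^ k * (k.factorial : ℝ) ^ 2 + momentTail q k m := by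
  rw [← multinomialSqSum_self, momentTail, add_comm, momentSum, ← Ico_add_one_right_eq_Icc, sum_Ico_succ_top hk]
  rfl

lemma momentTail_nonneg {q : ℝ} (hq : 0 ≤ q) (k m : ℕ) : 0 ≤ momentTail q k m :=
  sum_nonneg fun l _ => mul_nonneg (by positivity) (multinomialSqSum_nonneg l k)

lemma cast_choose_le_pow_of_le {m l n : ℕ} (hm : 1 ≤ m) (hln : l ≤ n) :
    (m.choose l : ℝ) ≤ (m : ℝ) ^ n :=
  calc (m.choose l : ℝ) ≤ (m : ℝ) ^ l := by exact_mod_cast Nat.choose_le_pow m l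
    _ ≤ (m : ℝ) ^ n := pow_le_pow_right₀ (by exact_mod_cast hm) hln

lemma exists_momentTail_le {q : ℝ} (hq : 0 < q) (k : ℕ) :
    ∃ C > 0, ∀ m : ℕ, 1 ≤ m → momentTail q k m ≤ C * q ^ (k - 1) * (m : ℝ) ^ (k - 1) := by
  set A := ∑ l ∈ Ico 1 k, q ^ l * multinomialSqSum l k
  have hA : 0 ≤ A := sum_nonneg fun l _ => mul_nonneg (by positivity) (multinomialSqSum_nonneg l k)
  refine ⟨(A + 1) / q ^ (k - 1), by positivity, fun m hm => ?_⟩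
  calc momentTail q k m ≤ ∑ l ∈ Ico 1 k, (m : ℝ) ^ (k - 1) * q ^ l * multinomialSqSum l k := by
        refine sum_le_sum fun l hl => ?_
        have hlk : l ≤ k - 1 := by have := (mem_Ico.mp hl).2; omega
        gcongr
        · exact multinomialSqSum_nonneg l k
        · exact cast_choose_le_pow_of_le hm hlk
    _ = A * (m : ℝ) ^ (k - 1) := by rw [sum_mul]; exact sum_congr rfl fun _ _ => by ring
    _ ≤ (A + 1) * (m : ℝ) ^ (k - 1) := by gcongr; linarith
    _ = (A + 1) / q ^ (k - 1) * q ^ (k - 1) * (m : ℝ) ^ (k - 1) := by field_simp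

lemma cast_choose_mul_factorial_le_pow (m k : ℕ) :
    (m.choose k : ℝ) * (k.factorial : ℝ) ≤ (m : ℝ) ^ k := by
  have := Nat.descFactorial_le_pow m k
  rw [Nat.descFactorial_eq_factorial_mul_choose, mul_comm] at this
  exact_mod_cast this

lemma cast_choose_mul_pow_mul_factorial_sq_le {q : ℝ} (hq : 0 ≤ q) (k m : ℕ) :
    (m.choose k : ℝ) * q ^ k * (k.factorial : ℝ) ^ 2 ≤ k.factorial * q ^ k * (m : ℝ) ^ k :=
  calc (m.choose k : ℝ) * q ^ k * (k.factorial : ℝ) ^ 2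
      = (m.choose k * k.factorial) * (k.factorial * q ^ k) := by ring
    _ ≤ (m : ℝ) ^ k * (k.factorial * q ^ k) := by
      gcongr; exact cast_choose_mul_factorial_le_pow m k
    _ = k.factorial * q ^ k * (m : ℝ) ^ k := by ring

lemma mul_pow_pred_le_mul_pow {k : ℕ} (hk : 1 ≤ k) {C D x : ℝ} (hx : 0 ≤ x)
    (hCx : C ≤ D * x) : C * x ^ (k - 1) ≤ D * x ^ k :=
  calc C * x ^ (k - 1) ≤ D * x * x ^ (k - 1) := by gcongr
    _ = D * x ^ k := by rw [mul_assoc, ← pow_succ', Nat.sub_add_cancel hk]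

theorem moment_sum_estimate_general (k : ℕ) (hk : 1 ≤ k) (q : ℝ) (hq0 : 0 < q) :
    (∃ C > 0, ∀ m : ℕ, k ≤ m →
      |momentSum q k m - (m.choose k : ℝ) * q ^ k * (Nat.factorial k : ℝ) ^ 2|
        ≤ C * q ^ (k - 1) * (m : ℝ) ^ (k - 1)) ∧
    (∀ c₀ : ℝ, 1 < c₀ → ∃ M : ℕ, ∀ m : ℕ, M ≤ m →
      momentSum q k m ≤ c₀ * (Nat.factorial k : ℝ) * q ^ k * (m : ℝ) ^ k) := by
  obtain ⟨C, hC, htail⟩ := exists_momentTail_le hq0 k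
  refine ⟨⟨C, hC, fun m hm => ?_⟩, fun c₀ hc₀ => ?_⟩
  · rw [momentSum_eq_add_momentTail hk, add_sub_cancel_left,
      abs_of_nonneg (momentTail_nonneg hq0.le k m)]
    exact htail m (hk.trans hm)
  · have hD : 0 < (c₀ - 1) * k.factorial := mul_pos (by linarith) (by positivity)
    obtain ⟨M, hM⟩ := Filter.eventually_atTop.mp <| (Filter.eventually_ge_atTop k).and <|
      ((tendsto_natCast_atTop_atTop.const_mul_atTop hq0).const_mul_atTop hD).eventually_ge_atTop C
    refine ⟨M, fun m hmM => ?_⟩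
    obtain ⟨hkm, hqm⟩ := hM m hmM
    calc momentSum q k m
        = (m.choose k : ℝ) * q ^ k * (k.factorial : ℝ) ^ 2 + momentTail q k m :=
          momentSum_eq_add_momentTail hk q m
      _ ≤ k.factorial * q ^ k * (m : ℝ) ^ k + (c₀ - 1) * k.factorial * (q * m) ^ k := by
          refine add_le_add (cast_choose_mul_pow_mul_factorial_sq_le hq0.le k m)
            ((htail m (hk.trans hkm)).trans ?_)
          rw [mul_assoc, ← mul_pow]
          exact mul_pow_pred_le_mul_pow hk (by positivity) hqm
      _ = c₀ * k.factorial * q ^ k * (m : ℝ) ^ k := by rw [mul_pow]; ring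

/-- The moment sum equals (m choose k)·q^k·(k!)² up to O(q^{k−1} m^{k−1}), and in
particular is at most c₀·k!·q^k·m^k for any c₀ > 1 once m is sufficiently large. -/
theorem moment_sum_estimate (k : ℕ) (hk : 1 ≤ k) (q : ℝ) (hq0 : 0 < q) (hq1 : q < 1) :
    (∃ C > 0, ∀ m : ℕ, k ≤ m →
      |momentSum q k m - (m.choose k : ℝ) * q ^ k * (Nat.factorial k : ℝ) ^ 2|
        ≤ C * q ^ (k - 1) * (m : ℝ) ^ (k - 1)) ∧
    (∀ c₀ : ℝ, 1 < c₀ → ∃ M : ℕ, ∀ m : ℕ, M ≤ m →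
      momentSum q k m ≤ c₀ * (Nat.factorial k : ℝ) * q ^ k * (m : ℝ) ^ k) :=
  moment_sum_estimate_general k hk q hq0
end

section
/- Let X ~ Binom(m, α log n / n) with m = ρn for some fixed ρ > 0 and α = O(1), and let k_n = τ ρ log n for some τ ∈ (0, α]. Then for sufficiently large n, P(X ≤ k_n) = n^{−ρ(α − τ log(eα/τ) + o(1))}. -/
/-!
`P(X ≤ k)` for `X ~ Binom(m, p)` lies between its last term and `k + 1` times
`μ^k / k! · (1 - p)^(m - k)`, where `μ = m p`: the `j`-th term is at most
`μ^j / j! · (1 - p)^(m - k)`, and these Poisson weights increase up to `j = k ≤ μ`. Both bounds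
are `μ^k / k! · e^(-μ + o(log n))`, and the Stirling bounds `(k/e)^k ≤ k! ≤ e √k (k/e)^k` give
`log (μ^k / k!) = k log (e μ / k) + O(log k)`. With `μ = ρ α log n` and `k ~ τ ρ log n`,
dividing by `log n` yields the exponent `τ ρ log (e α / τ) - ρ α`.
-/

open Filter Real Topology
open scoped Nat

lemma pow_div_exp_one_le_factorial (k : ℕ) : ((k : ℝ) / exp 1) ^ k ≤ k ! := by
  have h := pow_div_factorial_le_exp (x := (k : ℝ)) (Nat.cast_nonneg k) k
  rw [div_le_iff₀ (by positivity), ← exp_one_pow] at h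
  rw [div_pow, div_le_iff₀ (by positivity)]
  linarith

lemma factorial_le_exp_one_mul_sqrt_mul_pow {k : ℕ} (hk : k ≠ 0) :
    (k ! : ℝ) ≤ exp 1 * √k * ((k : ℝ) / exp 1) ^ k := by
  obtain ⟨k, rfl⟩ := Nat.exists_eq_add_one_of_ne_zero hk
  have h := Stirling.stirlingSeq'_antitone (Nat.zero_le k)
  simp only [Function.comp_apply, Nat.succ_eq_add_one, zero_add,
    Stirling.stirlingSeq_one] at h
  rw [Stirling.stirlingSeq, div_le_div_iff₀ (by positivity) (by positivity),
    Real.sqrt_mul zero_le_two] at h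
  refine le_of_mul_le_mul_right ?_ (by positivity : (0 : ℝ) < √2)
  linarith

lemma pow_div_factorial_le_pow_div_factorial {x : ℝ} {j k : ℕ} (hjk : j ≤ k) (hkx : (k : ℝ) ≤ x) :
    x ^ j / j ! ≤ x ^ k / k ! := by
  induction k, hjk using Nat.le_induction with
  | base => rfl
  | succ k _ ih =>
    push_cast at hkx
    have hx : 0 < x := by linarith [(Nat.cast_nonneg k : (0 : ℝ) ≤ k)]
    calc x ^ j / j ! ≤ x ^ k / k ! := ih (by linarith)
      _ ≤ x ^ k / k ! * (x / (k + 1)) :=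
        le_mul_of_one_le_right (by positivity) ((one_le_div (by positivity)).2 hkx)
      _ = x ^ (k + 1) / (k + 1)! := by
        rw [pow_succ, Nat.factorial_succ]; push_cast; field_simp

section PoissonWeight

variable {μ : ℝ} {k : ℕ}

lemma log_pow_div_factorial (hμ : 0 < μ) (hk : k ≠ 0) :
    log (μ ^ k / k !) = k * log (exp 1 * μ / k) - (log k ! - k * log (k / exp 1)) := by
  have hk' : (0 : ℝ) < k := by positivity
  rw [log_div (by positivity) (by positivity), log_pow, log_div (by positivity) hk'.ne',
    log_mul (exp_pos 1).ne' hμ.ne', log_div hk'.ne' (exp_pos 1).ne']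
  ring

lemma log_pow_div_factorial_le (hμ : 0 < μ) (hk : k ≠ 0) :
    log (μ ^ k / k !) ≤ k * log (exp 1 * μ / k) := by
  have h := log_le_log (by positivity) (pow_div_exp_one_le_factorial k)
  rw [log_pow] at h
  rw [log_pow_div_factorial hμ hk]
  linarith

lemma le_log_pow_div_factorial (hμ : 0 < μ) (hk : k ≠ 0) :
    k * log (exp 1 * μ / k) - (1 + log k) ≤ log (μ ^ k / k !) := by
  have hk' : (0 : ℝ) < k := by positivity
  have h := log_le_log (by positivity) (factorial_le_exp_one_mul_sqrt_mul_pow hk)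
  rw [log_mul (by positivity) (by positivity), log_mul (exp_pos 1).ne' (by positivity), log_exp,
    log_pow, log_sqrt hk'.le] at h
  have hlogk : 0 ≤ log (k : ℝ) := log_nonneg (by exact_mod_cast Nat.one_le_iff_ne_zero.2 hk)
  rw [log_pow_div_factorial hμ hk]
  linarith

end PoissonWeight

noncomputable def binomialCDF (m : ℕ) (p : ℝ) (k : ℕ) : ℝ :=
  ∑ j ∈ Finset.range (k + 1), (m.choose j : ℝ) * p ^ j * (1 - p) ^ (m - j)

lemma binomial_term_le_binomialCDF {m k j : ℕ} {p : ℝ} (hp0 : 0 ≤ p) (hp1 : p ≤ 1)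
    (hj : j ≤ k) : (m.choose j : ℝ) * p ^ j * (1 - p) ^ (m - j) ≤ binomialCDF m p k := by
  have hq0 : 0 ≤ 1 - p := by linarith
  exact Finset.single_le_sum (f := fun i ↦ (m.choose i : ℝ) * p ^ i * (1 - p) ^ (m - i))
    (fun i _ ↦ by positivity) (Finset.mem_range_succ_iff.2 hj)

lemma binomialCDF_pos {m k : ℕ} {p : ℝ} (hp0 : 0 ≤ p) (hp1 : p < 1) : 0 < binomialCDF m p k := by
  refine lt_of_lt_of_le ?_ (binomial_term_le_binomialCDF hp0 hp1.le (Nat.zero_le k))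
  have : 0 < 1 - p := by linarith
  simpa using pow_pos this m

lemma pow_div_factorial_mul_le_binomialCDF {m k : ℕ} {p : ℝ} (hp0 : 0 ≤ p) (hp1 : p ≤ 1)
    (hkm : k ≤ m) : ((m - k) * p) ^ k / k ! * (1 - p) ^ m ≤ binomialCDF m p k := by
  have hq0 : 0 ≤ 1 - p := by linarith
  have hchoose : ((m : ℝ) - k) ^ k / k ! ≤ m.choose k := by
    refine le_trans ?_ (Nat.pow_le_choose k m)
    gcongr
    · linarith [(Nat.cast_le (α := ℝ)).2 hkm]
    · rw [Nat.cast_sub (by omega)]; push_cast; linarith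
  calc ((m - k) * p) ^ k / k ! * (1 - p) ^ m
      ≤ ((m : ℝ) - k) ^ k / k ! * p ^ k * (1 - p) ^ (m - k) := by
        rw [mul_pow, mul_div_right_comm]
        exact mul_le_mul_of_nonneg_left (pow_le_pow_of_le_one hq0 (by linarith) (Nat.sub_le m k))
          (by have := (Nat.cast_le (α := ℝ)).2 hkm; positivity)
    _ ≤ (m.choose k : ℝ) * p ^ k * (1 - p) ^ (m - k) := by gcongr
    _ ≤ binomialCDF m p k := binomial_term_le_binomialCDF hp0 hp1 le_rfl

lemma binomialCDF_le {m k : ℕ} {p : ℝ} (hp0 : 0 ≤ p) (hp1 : p ≤ 1) (hk : k ≤ m * p) :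
    binomialCDF m p k ≤ (k + 1) * ((m * p) ^ k / k ! * (1 - p) ^ (m - k)) := by
  have hq0 : 0 ≤ 1 - p := by linarith
  have hterm : ∀ j ∈ Finset.range (k + 1), (m.choose j : ℝ) * p ^ j * (1 - p) ^ (m - j) ≤
      (m * p) ^ k / k ! * (1 - p) ^ (m - k) := by
    intro j hj
    have hjk : j ≤ k := Finset.mem_range_succ_iff.1 hj
    calc (m.choose j : ℝ) * p ^ j * (1 - p) ^ (m - j)
        ≤ (m : ℝ) ^ j / j ! * p ^ j * (1 - p) ^ (m - k) := by
          gcongr ?_ * _ * ?_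
          · exact Nat.choose_le_pow_div j m
          · exact pow_le_pow_of_le_one hq0 (by linarith) (by omega)
      _ = (m * p) ^ j / j ! * (1 - p) ^ (m - k) := by rw [mul_pow, div_mul_eq_mul_div]
      _ ≤ (m * p) ^ k / k ! * (1 - p) ^ (m - k) := by
          gcongr ?_ * _
          exact pow_div_factorial_le_pow_div_factorial hjk hk
  simpa [binomialCDF] using Finset.sum_le_card_nsmul _ _ _ hterm

lemma log_binomialCDF_le {m k : ℕ} {p : ℝ} (hp0 : 0 ≤ p) (hp1 : p < 1) (hk0 : k ≠ 0)
    (hk : k ≤ m * p) :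
    log (binomialCDF m p k) ≤ log (k + 1) + k * log (exp 1 * (m * p) / k) - (m - k) * p := by
  have hk1 : (1 : ℝ) ≤ k := by exact_mod_cast Nat.one_le_iff_ne_zero.2 hk0
  have hkm : (k : ℝ) ≤ m := hk.trans (mul_le_of_le_one_right (Nat.cast_nonneg m) hp1.le)
  have hw := log_pow_div_factorial_le (by linarith : (0 : ℝ) < m * p) hk0
  have hq : log (1 - p) ≤ -p := by linarith [log_le_sub_one_of_pos (by linarith : 0 < 1 - p)]
  calc log (binomialCDF m p k) ≤ log ((k + 1) * ((m * p) ^ k / k ! * (1 - p) ^ (m - k))) :=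
        log_le_log (binomialCDF_pos hp0 hp1) (binomialCDF_le hp0 hp1.le hk)
    _ = log (k + 1) + log ((m * p) ^ k / k !) + (m - k) * log (1 - p) := by
        have hq0 : (1 - p) ^ (m - k) ≠ 0 := pow_ne_zero _ (by linarith)
        have hw0 : (m * p) ^ k / k ! ≠ 0 :=
          div_ne_zero (pow_ne_zero _ (by linarith)) (by positivity)
        rw [log_mul (by positivity) (mul_ne_zero hw0 hq0), log_mul hw0 hq0, log_pow,
          Nat.cast_sub (by exact_mod_cast hkm), add_assoc]
    _ ≤ log (k + 1) + k * log (exp 1 * (m * p) / k) + (m - k) * (-p) := by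
        gcongr
    _ = _ := by ring

lemma le_log_binomialCDF {m k : ℕ} {p : ℝ} (hp : 0 < p) (hp1 : p < 1) (hk0 : k ≠ 0)
    (hkm : k < m) :
    k * log (exp 1 * ((m - k) * p) / k) - (1 + log k) - m * p / (1 - p) ≤
      log (binomialCDF m p k) := by
  have hq0 : 0 < 1 - p := by linarith
  have hμ : 0 < ((m : ℝ) - k) * p := mul_pos (sub_pos.2 (by exact_mod_cast hkm)) hp
  have hw := le_log_pow_div_factorial hμ hk0
  have hq : -(p / (1 - p)) ≤ log (1 - p) := by
    have h := one_sub_inv_le_log_of_pos hq0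
    rwa [show 1 - (1 - p)⁻¹ = -(p / (1 - p)) by field_simp; ring] at h
  calc k * log (exp 1 * ((m - k) * p) / k) - (1 + log k) - m * p / (1 - p)
      ≤ log (((m - k) * p) ^ k / k !) + m * log (1 - p) := by
        have := mul_le_mul_of_nonneg_left hq (Nat.cast_nonneg (α := ℝ) m)
        rw [mul_neg, ← mul_div_assoc] at this
        linarith
    _ = log (((m - k) * p) ^ k / k ! * (1 - p) ^ m) := by
        rw [log_mul (by positivity) (by positivity), log_pow]
    _ ≤ log (binomialCDF m p k) :=
        log_le_log (by positivity) (pow_div_factorial_mul_le_binomialCDF hp.le hp1.le hkm.le)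

section Asymptotics

variable {ι : Type*} {l : Filter ι} {L : ι → ℝ}

lemma tendsto_log_div_of_tendsto_div {x : ι → ℝ} {c : ℝ} (hc : c ≠ 0) (hL : Tendsto L l atTop)
    (hx : Tendsto (fun i ↦ x i / L i) l (𝓝 c)) : Tendsto (fun i ↦ log (x i) / L i) l (𝓝 0) := by
  have hlogL : Tendsto (fun i ↦ log (L i) / L i) l (𝓝 0) := by
    simpa [Function.comp_def] using (tendsto_pow_log_div_mul_add_atTop 1 0 1 one_ne_zero).comp hL
  have h := ((hx.log hc).mul (tendsto_inv_atTop_zero.comp hL)).add hlogL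
  rw [mul_zero, zero_add] at h
  refine h.congr' ?_
  filter_upwards [hL.eventually_gt_atTop 0, hx.eventually_ne hc] with i hLi hxi
  have hx0 : x i ≠ 0 := left_ne_zero_of_mul (by simpa [div_eq_mul_inv] using hxi)
  simp only [Function.comp_apply, log_div hx0 hLi.ne']
  field_simp
  ring

lemma tendsto_mul_log_exp_one_mul_div {k X : ι → ℝ} {c d : ℝ} (hc : c ≠ 0) (hd : d ≠ 0)
    (hL : ∀ᶠ i in l, L i ≠ 0) (hk : Tendsto (fun i ↦ k i / L i) l (𝓝 c))
    (hX : Tendsto (fun i ↦ X i / L i) l (𝓝 d)) :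
    Tendsto (fun i ↦ k i * log (exp 1 * X i / k i) / L i) l (𝓝 (c * log (exp 1 * d / c))) := by
  have h := hk.mul ((((tendsto_const_nhds (x := exp 1)).mul hX).div hk hc).log (by positivity))
  refine h.congr' ?_
  filter_upwards [hL] with i hi
  rw [Pi.div_apply, ← mul_div_assoc, div_div_div_cancel_right₀ hi, div_mul_eq_mul_div]

theorem tendsto_log_binomialCDF_div {m k : ι → ℕ} {p : ι → ℝ} {c d : ℝ} (hc : 0 < c) (hd : 0 < d)
    (hL : Tendsto L l atTop) (hp : Tendsto p l (𝓝 0)) (hp0 : ∀ᶠ i in l, 0 < p i)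
    (hk : Tendsto (fun i ↦ (k i : ℝ) / L i) l (𝓝 c))
    (hμ : Tendsto (fun i ↦ m i * p i / L i) l (𝓝 d))
    (hkμ : ∀ᶠ i in l, (k i : ℝ) ≤ m i * p i) :
    Tendsto (fun i ↦ log (binomialCDF (m i) (p i) (k i)) / L i) l
      (𝓝 (c * log (exp 1 * d / c) - d)) := by
  have hL0 : ∀ᶠ i in l, 0 < L i := hL.eventually_gt_atTop 0
  have hinv : Tendsto (fun i ↦ 1 / L i) l (𝓝 0) := by
    simpa [Function.comp_def] using tendsto_inv_atTop_zero.comp hL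
  have hμ' : Tendsto (fun i ↦ (m i - k i) * p i / L i) l (𝓝 d) := by
    simpa [sub_mul, sub_div, mul_div_right_comm] using hμ.sub (hk.mul hp)
  have hlogk := tendsto_log_div_of_tendsto_div hc.ne' hL hk
  have hlogk1 : Tendsto (fun i ↦ log (k i + 1) / L i) l (𝓝 0) :=
    tendsto_log_div_of_tendsto_div hc.ne' hL (by simpa [add_div] using hk.add hinv)
  have hLne : ∀ᶠ i in l, L i ≠ 0 := hL.eventually_ne_atTop 0
  have hupper : Tendsto (fun i ↦ (log (k i + 1) + k i * log (exp 1 * (m i * p i) / k i)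
      - (m i - k i) * p i) / L i) l (𝓝 (c * log (exp 1 * d / c) - d)) := by
    simpa [add_div, sub_div] using
      (hlogk1.add (tendsto_mul_log_exp_one_mul_div hc.ne' hd.ne' hLne hk hμ)).sub hμ'
  have hlower : Tendsto (fun i ↦ (k i * log (exp 1 * ((m i - k i) * p i) / k i) - (1 + log (k i))
      - m i * p i / (1 - p i)) / L i) l (𝓝 (c * log (exp 1 * d / c) - d)) := by
    have h := ((tendsto_mul_log_exp_one_mul_div hc.ne' hd.ne' hLne hk hμ').sub
      (hinv.add hlogk)).sub
      (hμ.div ((tendsto_const_nhds (x := (1 : ℝ))).sub hp) (by norm_num))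
    simp only [add_zero, sub_zero, div_one] at h
    refine h.congr' ?_
    filter_upwards with i
    rw [Pi.div_apply, sub_div, sub_div, add_div, div_right_comm (_ * p i)]
  have hk0 : ∀ᶠ i in l, k i ≠ 0 := by
    filter_upwards [hk.eventually_const_lt hc] with i hi h
    simp [h] at hi
  have hp1 : ∀ᶠ i in l, p i < 1 := hp.eventually_lt_const one_pos
  have hkm : ∀ᶠ i in l, k i < m i := by
    filter_upwards [hμ'.eventually_const_lt hd, hL0, hp0] with i hi hLi hpi
    have h := (div_pos_iff_of_pos_right hLi).1 hi
    have : (k i : ℝ) < m i := by nlinarith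
    exact_mod_cast this
  refine tendsto_of_tendsto_of_tendsto_of_le_of_le' hlower hupper ?_ ?_
  · filter_upwards [hL0, hp0, hp1, hk0, hkm] with i hLi hpi hpi1 hki hkmi
    exact div_le_div_of_nonneg_right (le_log_binomialCDF hpi hpi1 hki hkmi) hLi.le
  · filter_upwards [hL0, hp0, hp1, hk0, hkμ] with i hLi hpi hpi1 hki hkμi
    exact div_le_div_of_nonneg_right (log_binomialCDF_le hpi.le hpi1 hki hkμi) hLi.le

end Asymptotics

lemma exists_eq_rpow_of_tendsto_log_div_log {f : ℕ → ℝ} {a b : ℝ} (ha : a ≠ 0)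
    (hf : ∀ᶠ n in atTop, 0 < f n)
    (hlim : Tendsto (fun n : ℕ ↦ log (f n) / log n) atTop (𝓝 (a * b))) :
    ∃ ε : ℕ → ℝ, Tendsto ε atTop (𝓝 0) ∧ ∀ᶠ n : ℕ in atTop, f n = (n : ℝ) ^ (a * (b + ε n)) := by
  refine ⟨fun n ↦ log (f n) / log n / a - b, ?_, ?_⟩
  · simpa [ha] using (hlim.div_const a).sub_const b
  · filter_upwards [hf, eventually_gt_atTop 1] with n hfn hn
    have hlog : 0 < log (n : ℝ) := log_pos (by exact_mod_cast hn)
    rw [show a * (b + (log (f n) / log n / a - b)) = log (f n) / log n by field_simp; ring,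
      rpow_def_of_pos (by positivity), mul_div_cancel₀ _ hlog.ne', exp_log hfn]

lemma tendsto_log_natCast_atTop : Tendsto (fun n : ℕ ↦ log n) atTop atTop :=
  tendsto_log_atTop.comp tendsto_natCast_atTop_atTop

lemma tendsto_mul_log_natCast_div_natCast (α : ℝ) :
    Tendsto (fun n : ℕ ↦ α * log n / n) atTop (𝓝 0) := by
  simpa [mul_div_assoc] using ((tendsto_pow_log_div_mul_add_atTop 1 0 1 one_ne_zero).comp
    tendsto_natCast_atTop_atTop).const_mul α

lemma tendsto_log_binomialCDF_div_log {ρ α τ : ℝ} (hρ : 0 < ρ) (hτ0 : 0 < τ) (hτα : τ ≤ α)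
    {m : ℕ → ℕ} (hm : ∀ n, (m n : ℝ) = ρ * n) :
    Tendsto (fun n : ℕ ↦ log (binomialCDF (m n) (α * log n / n) ⌊τ * ρ * log n⌋₊) / log n) atTop
      (𝓝 (-ρ * (α - τ * log (exp 1 * α / τ)))) := by
  have hα : 0 < α := hτ0.trans_le hτα
  have hlog : ∀ᶠ n : ℕ in atTop, 0 < log (n : ℝ) := by
    filter_upwards [eventually_gt_atTop 1] with n hn
    exact log_pos (by exact_mod_cast hn)
  have hmp : ∀ᶠ n : ℕ in atTop, (m n : ℝ) * (α * log n / n) = ρ * α * log n := by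
    filter_upwards [eventually_ne_atTop 0] with n hn
    rw [hm]
    field_simp
  have hp0 : ∀ᶠ n : ℕ in atTop, 0 < α * log n / n := by
    filter_upwards [hlog, eventually_gt_atTop 0] with n hLn hn
    exact div_pos (mul_pos hα hLn) (Nat.cast_pos.2 hn)
  have hk : Tendsto (fun n : ℕ ↦ (⌊τ * ρ * log n⌋₊ : ℝ) / log n) atTop (𝓝 (τ * ρ)) :=
    (tendsto_nat_floor_mul_div_atTop (mul_pos hτ0 hρ).le).comp tendsto_log_natCast_atTop
  have hμ : Tendsto (fun n : ℕ ↦ m n * (α * log n / n) / log n) atTop (𝓝 (ρ * α)) := by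
    refine tendsto_const_nhds.congr' ?_
    filter_upwards [hmp, hlog] with n hn hLn
    rw [hn]
    field_simp
  have hkμ : ∀ᶠ n : ℕ in atTop, (⌊τ * ρ * log n⌋₊ : ℝ) ≤ m n * (α * log n / n) := by
    filter_upwards [hmp, hlog] with n hn hLn
    rw [hn]
    refine (Nat.floor_le (by positivity)).trans ?_
    nlinarith [mul_le_mul_of_nonneg_right hτα (mul_pos hρ hLn).le]
  convert tendsto_log_binomialCDF_div (mul_pos hτ0 hρ) (mul_pos hρ hα)
    tendsto_log_natCast_atTop (tendsto_mul_log_natCast_div_natCast α) hp0 hk hμ hkμ using 2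
  rw [show exp 1 * (ρ * α) / (τ * ρ) = exp 1 * α / τ by field_simp]
  ring

theorem binomial_tail_asymptotics_general (ρ α τ : ℝ) (hρ : 0 < ρ)
    (hτ : τ ∈ Set.Ioc 0 α) (m : ℕ → ℕ) (hm : ∀ n, (m n : ℝ) = ρ * n) :
    ∃ ε : ℕ → ℝ, Tendsto ε atTop (nhds 0) ∧
      ∀ᶠ n : ℕ in atTop,
        (∑ j ∈ Finset.range (⌊τ * ρ * Real.log n⌋₊ + 1),
            ((m n).choose j : ℝ) * (α * Real.log n / n) ^ j *
              (1 - α * Real.log n / n) ^ (m n - j))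
          = (n : ℝ) ^ (-ρ * (α - τ * Real.log (Real.exp 1 * α / τ) + ε n)) := by
  have hα : 0 < α := hτ.1.trans_le hτ.2
  have hpos : ∀ᶠ n : ℕ in atTop, 0 < binomialCDF (m n) (α * log n / n) ⌊τ * ρ * log n⌋₊ := by
    filter_upwards [(tendsto_mul_log_natCast_div_natCast α).eventually_lt_const one_pos]
      with n hn
    exact binomialCDF_pos (by positivity) hn
  exact exists_eq_rpow_of_tendsto_log_div_log (neg_ne_zero.2 hρ.ne') hpos
    (tendsto_log_binomialCDF_div_log hρ hτ.1 hτ.2 hm)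

/-- Binomial tail bound: for X ~ Binom(m, α log n / n) with m = ρn and
k_n = τρ log n, P(X ≤ k_n) = n^{−ρ(α − τ log(eα/τ) + o(1))}. -/
theorem binomial_tail_asymptotics (ρ α τ : ℝ) (hρ : 0 < ρ) (hα : 0 < α)
    (hτ : τ ∈ Set.Ioc 0 α) (m : ℕ → ℕ) (hm : ∀ n, (m n : ℝ) = ρ * n) :
    ∃ ε : ℕ → ℝ, Tendsto ε atTop (nhds 0) ∧
      ∀ᶠ n : ℕ in atTop,
        (∑ j ∈ Finset.range (⌊τ * ρ * Real.log n⌋₊ + 1),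
            ((m n).choose j : ℝ) * (α * Real.log n / n) ^ j *
              (1 - α * Real.log n / n) ^ (m n - j))
          = (n : ℝ) ^ (-ρ * (α - τ * Real.log (Real.exp 1 * α / τ) + ε n)) :=
  binomial_tail_asymptotics_general ρ α τ hρ hτ m hm
end
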